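/- arXiv:1903.02544 — 2 statements merged into one kernel-verified Lean document; each statement's English description precedes it below -/
import Mathlib

section
/- Realize the octonions Θ via the Cayley–Dickson construction over M_2(k): Θ = M_2(k)⊕M_2(k) with multiplication (x_1,y_1)(x_2,y_2) = (x_1x_2 + γ y_2'y_1, y_2x_1 + y_1x_2') and conjugation (x,y)* = (x',−y), where h' denotes the adjugate of h ∈ M_2(k). Define an action of GL_2 × GL_2 on Θ by (g,h)·(x,y) = (g x h', μ_h y g') with μ_h = diag(det h, 1). Then for z_1 = (x_1,y_1), z_2 = (x_2,y_2): ((g,h)z_1)·((g,h)z_2)* = det(g)det(h)·( g(x_1x_2' − γ y_2'y_1)g^{-1}, μ_h(−y_2x_1 + y_1x_2)h^{-1} ). -/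
/-!
STATEMENT 9 (Lemma gl2gl2, equation (9.1)):
Realize the octonions via the Cayley–Dickson construction over M₂(k):
Θ = M₂(k)⊕M₂(k) with multiplication (x₁,y₁)(x₂,y₂) = (x₁x₂ + γ y₂'y₁, y₂x₁ + y₁x₂')
and conjugation (x,y)* = (x', −y), where h' is the adjugate of h.  Define the
action of GL₂×GL₂ on Θ by (g,h)·(x,y) = (g x h', μ_h y g') with μ_h = diag(det h, 1).
Then for z₁ = (x₁,y₁), z₂ = (x₂,y₂):
((g,h)z₁)·((g,h)z₂)* = det(g)·det(h)·( g(x₁x₂' − γ y₂'y₁)g⁻¹, μ_h(−y₂x₁ + y₁x₂)h⁻¹ ).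
-/

noncomputable section
open Matrix

/-- Octonions via the Cayley–Dickson construction over `M₂(k)` with parameter `γ`:
`Θ = B ⊕ B`, `B = M₂(k)`. -/
abbrev Oct (k : Type*) [Field k] := (Matrix (Fin 2) (Fin 2) k) × (Matrix (Fin 2) (Fin 2) k)

variable {k : Type*} [Field k]

/-- The 2×2 adjugate/quaternion conjugate `h' = tr(h)•1 − h`, so `h·h' = det(h)·1`
(for 2×2 matrices this is `Matrix.adjugate`). -/
def adj2 (x : Matrix (Fin 2) (Fin 2) k) : Matrix (Fin 2) (Fin 2) k :=
  (Matrix.trace x) • (1 : Matrix (Fin 2) (Fin 2) k) - x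

/-- Cayley–Dickson multiplication:
`(x₁,y₁)(x₂,y₂) = (x₁x₂ + γ·y₂'y₁, y₂x₁ + y₁x₂')`. -/
def omul (γ : k) (z₁ z₂ : Oct k) : Oct k :=
  (z₁.1 * z₂.1 + γ • (adj2 z₂.2 * z₁.2), z₂.2 * z₁.1 + z₁.2 * adj2 z₂.1)

/-- Octonion conjugation `(x,y)* = (x', −y)`. -/
def oconj (z : Oct k) : Oct k := (adj2 z.1, -z.2)

/-- Octonion norm `n_Θ(x,y) = det x − γ·det y`. -/
def onorm (γ : k) (z : Oct k) : k := z.1.det - γ * z.2.det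

/-- Octonion trace `tr_Θ(x,y) = tr(x)`. -/
def otr (z : Oct k) : k := Matrix.trace z.1

/-- The octonion unit `1 = (1,0)`. -/
def oone : Oct k := ((1 : Matrix (Fin 2) (Fin 2) k), 0)

/-- The triality trilinear form `(x,y,z) = tr_Θ((x·y)·z)`. -/
def trilForm (γ : k) (x y z : Oct k) : k := otr (omul γ (omul γ x y) z)

/-- `g` is a similitude of the norm with similitude factor `ν`. -/
def IsSimil (γ : k) (g : Oct k → Oct k) (ν : k) : Prop :=
  ∀ x, onorm γ (g x) = ν * onorm γ x

/-- `μ_h = diag(det h, 1)`. -/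
def muMat (h : Matrix (Fin 2) (Fin 2) k) : Matrix (Fin 2) (Fin 2) k :=
  Matrix.diagonal ![h.det, 1]

/-- The action `(g,h)·(x,y) = (g x h', μ_h y g')` of `GL₂×GL₂` on `Θ`. -/
def octAct (g h : Matrix (Fin 2) (Fin 2) k) (z : Oct k) : Oct k :=
  (g * z.1 * adj2 h, muMat h * z.2 * adj2 g)

lemma adj2_eq_adjugate (x : Matrix (Fin 2) (Fin 2) k) : adj2 x = x.adjugate := by
  rw [Matrix.adjugate_fin_two]
  ext i j
  fin_cases i <;> fin_cases j <;>
    simp [adj2, Matrix.trace_fin_two, Matrix.one_apply]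

lemma adj2_mul (x y : Matrix (Fin 2) (Fin 2) k) :
    adj2 (x * y) = adj2 y * adj2 x := by
  simp [adj2_eq_adjugate, Matrix.adjugate_mul_distrib]

lemma adj2_neg (x : Matrix (Fin 2) (Fin 2) k) : adj2 (-x) = -adj2 x := by
  simp [adj2, neg_add_eq_sub]

lemma adj2_adj2 (x : Matrix (Fin 2) (Fin 2) k) : adj2 (adj2 x) = x := by
  simp only [adj2]
  have : Matrix.trace ((Matrix.trace x) • (1 : Matrix (Fin 2) (Fin 2) k) - x)
      = Matrix.trace x := by
    simp [Matrix.trace_smul, Matrix.trace_one, two_smul]; ring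
  rw [this, sub_sub_cancel]

lemma adj2_mul_self' (x r : Matrix (Fin 2) (Fin 2) k) :
    adj2 x * (x * r) = x.det • r := by
  rw [← mul_assoc, adj2_eq_adjugate, Matrix.adjugate_mul, Matrix.smul_mul, one_mul]

lemma mul_adj2' (x r : Matrix (Fin 2) (Fin 2) k) :
    x * (adj2 x * r) = x.det • r := by
  rw [← mul_assoc, adj2_eq_adjugate, Matrix.mul_adjugate, Matrix.smul_mul, one_mul]

lemma det_adj2 (x : Matrix (Fin 2) (Fin 2) k) : (adj2 x).det = x.det := by
  rw [adj2_eq_adjugate, Matrix.det_adjugate, Fintype.card_fin]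
  norm_num

lemma det_muMat (h : Matrix (Fin 2) (Fin 2) k) : (muMat h).det = h.det := by
  simp [muMat]

lemma inv_eq_adj2 (g : Matrix (Fin 2) (Fin 2) k) (hg : IsUnit g.det) :
    g⁻¹ = (g.det)⁻¹ • adj2 g := by
  rw [Matrix.inv_def, adj2_eq_adjugate, Ring.inverse_eq_inv']

theorem gl2gl2_action_formula (γ : k)
    (g h : Matrix (Fin 2) (Fin 2) k) (hg : IsUnit g.det) (hh : IsUnit h.det)
    (z₁ z₂ : Oct k) :
    omul γ (octAct g h z₁) (oconj (octAct g h z₂)) =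
      (g.det * h.det) •
        ((g * (z₁.1 * adj2 z₂.1 - γ • (adj2 z₂.2 * z₁.2)) * g⁻¹,
          muMat h * (-(z₂.2 * z₁.1) + z₁.2 * z₂.1) * h⁻¹) : Oct k) := by
  obtain ⟨x₁, y₁⟩ := z₁
  obtain ⟨x₂, y₂⟩ := z₂
  have hgd : g.det ≠ 0 := hg.ne_zero
  have hhd : h.det ≠ 0 := hh.ne_zero
  simp only [omul, octAct, oconj, Prod.smul_mk, Prod.mk.injEq,
    inv_eq_adj2 g hg, inv_eq_adj2 h hh]
  constructor
  · simp only [adj2_mul, adj2_neg, adj2_adj2, mul_assoc, neg_mul, mul_neg,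
      adj2_mul_self', mul_adj2', det_adj2, det_muMat, mul_smul_comm,
      smul_mul_assoc, smul_smul, smul_neg, sub_mul, mul_sub, smul_sub]
    have e1 : g.det * (h.det * g.det⁻¹) = h.det := by field_simp
    have e2 : g.det * (h.det * (g.det⁻¹ * γ)) = γ * h.det := by field_simp
    rw [e1, e2, sub_eq_add_neg]
  · simp only [adj2_mul, adj2_neg, adj2_adj2, mul_assoc, neg_mul, mul_neg,
      adj2_mul_self', mul_adj2', det_adj2, det_muMat, mul_smul_comm,
      smul_mul_assoc, smul_smul, smul_neg, add_mul, mul_add, smul_add, neg_add]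
    have e3 : g.det * (h.det * h.det⁻¹) = g.det := by field_simp
    rw [e3]
end
end

section
/- Let Θ be a split octonion algebra over k with Zorn basis ε_1, e_1, e_2, e_3, e_1*, e_2*, e_3*, ε_2, and let W = Span{ε_1, e_3} ⊆ Θ (a non-null isotropic 2-plane). The element X = ε_1 ∧ e_3* of the Lie algebra K = ker(κ: ∧²Θ → V_7) is nilpotent, annihilates e_1, e_2, e_1*, e_2* and ε_1, and satisfies X(e_3) = −ε_1; consequently the one-parameter unipotent subgroup exp(xX) ⊆ Spin(7) acts as the identity on W^⊥/W and acts on W = Span{ε_1, e_3} as the unipotent radical of a Borel subgroup of GL(W). -/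
/-!
STATEMENT 19 (the key computation in the vanishing for non-null orbits):
Let Θ be a split octonion algebra over k (char 0), with Zorn-type basis elements
ε₁, e₁, e₂, e₃, e₁*, e₂*, e₃*, ε₂, and let W = Span{ε₁, e₃} ⊆ Θ (a non-null
isotropic 2-plane).  The element X = ε₁ ∧ e₃* of the Lie algebra
K = ker(κ : ∧²Θ → V₇) is nilpotent, annihilates e₁, e₂, e₁*, e₂* and ε₁, and
satisfies X(e₃) = −ε₁; consequently the one-parameter unipotent subgroup
exp(xX) ⊆ Spin(7) acts as the identity on W^⊥/W (i.e. X maps W^⊥ into W) and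
acts on W as the unipotent radical of a Borel subgroup of GL(W).

Formalization: split octonions = Cayley–Dickson over M₂(k) with γ = 1, with the
dictionary  ε₁ = (E₁₁,0), ε₂ = (E₂₂,0), e₃ = (E₁₂,0), e₃* = (E₂₁,0), and the four
remaining basis vectors e₁, e₂, e₁*, e₂* given by (0,E₁₁), (0,E₁₂), (0,E₂₁),
(0,E₂₂);  X acts as the element
T = T_{ε₁,e₃*} of so(Θ): z ↦ B(e₃*,z)·ε₁ − B(ε₁,z)·e₃*, where B is the norm
bilinear form.  X ∈ K is the statement Im(ε₁·(e₃*)*) = 0.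
-/

noncomputable section
open Matrix

variable {k : Type*} [Field k]

/-- The norm bilinear form (γ = 1): `B(z,w) = n(z+w) − n(z) − n(w)`. -/
def Bform (z w : Oct k) : k :=
  onorm 1 (z + w) - onorm 1 z - onorm 1 w

/-- The trace-zero projection `Im(u) = u − (tr u / 2)·1`. -/
def oIm [CharZero k] (z : Oct k) : Oct k := z - (otr z / 2) • (oone : Oct k)

/-- ε₁ = (E₁₁,0). -/
def zeps₁ : Oct k := (Matrix.single 0 0 (1 : k), 0)

/-- e₃ = (E₁₂,0). -/
def ze₃ : Oct k := (Matrix.single 0 1 (1 : k), 0)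

/-- e₃* = (E₂₁,0), the dual partner of e₃ (B(e₃*,e₃) = −1). -/
def ze₃s : Oct k := (Matrix.single 1 0 (1 : k), 0)

/-- The endomorphism `X = ε₁ ∧ e₃*` of Θ: `z ↦ B(e₃*,z)·ε₁ − B(ε₁,z)·e₃*`. -/
def Xop (z : Oct k) : Oct k := Bform ze₃s z • zeps₁ - Bform zeps₁ z • ze₃s

theorem Bform_comm (z w : Oct k) : Bform z w = Bform w z := by
  rw [Bform, Bform, add_comm, sub_right_comm]

theorem Bform_apply (z w : Oct k) :
    Bform z w = z.1 0 0 * w.1 1 1 + w.1 0 0 * z.1 1 1 - z.1 0 1 * w.1 1 0 - w.1 0 1 * z.1 1 0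
      - (z.2 0 0 * w.2 1 1 + w.2 0 0 * z.2 1 1 - z.2 0 1 * w.2 1 0 - w.2 0 1 * z.2 1 0) := by
  simp only [Bform, onorm, det_fin_two, Prod.fst_add, Prod.snd_add, Matrix.add_apply]
  ring

theorem Bform_zeps₁_left (z : Oct k) : Bform zeps₁ z = z.1 1 1 := by
  simp [Bform_apply, zeps₁]

theorem Bform_ze₃s_left (z : Oct k) : Bform ze₃s z = -z.1 0 1 := by
  simp [Bform_apply, ze₃s]

theorem Xop_apply (z : Oct k) : Xop z = (-z.1 0 1) • zeps₁ - z.1 1 1 • ze₃s := by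
  rw [Xop, Bform_zeps₁_left, Bform_ze₃s_left]

theorem Xop_apply_fst_zero_zero (z : Oct k) : (Xop z).1 0 0 = -z.1 0 1 := by
  simp [Xop_apply, zeps₁, ze₃s]

theorem Xop_apply_fst_one_zero (z : Oct k) : (Xop z).1 1 0 = -z.1 1 1 := by
  simp [Xop_apply, zeps₁, ze₃s]

theorem Xop_apply_fst_zero_one (z : Oct k) : (Xop z).1 0 1 = 0 := by
  simp [Xop_apply, zeps₁, ze₃s]

theorem Xop_apply_fst_one_one (z : Oct k) : (Xop z).1 1 1 = 0 := by
  simp [Xop_apply, zeps₁, ze₃s]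

theorem Xop_eq_zero_iff (z : Oct k) : Xop z = 0 ↔ z.1 0 1 = 0 ∧ z.1 1 1 = 0 := by
  refine ⟨fun h => ⟨?_, ?_⟩, fun ⟨h01, h11⟩ => by simp [Xop_apply, h01, h11]⟩
  · simpa [h] using Xop_apply_fst_zero_zero z
  · simpa [h] using Xop_apply_fst_one_zero z

theorem Xop_Xop (z : Oct k) : Xop (Xop z) = 0 :=
  (Xop_eq_zero_iff _).2 ⟨Xop_apply_fst_zero_one z, Xop_apply_fst_one_one z⟩

theorem Xop_ze₃ : Xop (ze₃ : Oct k) = -zeps₁ := by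
  simp [Xop_apply, ze₃]

theorem Xop_mem_span_of_Bform_zeps₁_eq_zero {z : Oct k} (hz : Bform z zeps₁ = 0) :
    Xop z ∈ Submodule.span k {(zeps₁ : Oct k), ze₃} := by
  rw [Bform_comm, Bform_zeps₁_left] at hz
  rw [Xop_apply, hz, zero_smul, sub_zero]
  exact Submodule.smul_mem _ _ (Submodule.subset_span (Set.mem_insert _ _))

theorem omul_zeps₁_oconj_ze₃s (γ : k) : omul γ zeps₁ (oconj ze₃s) = 0 := by
  ext i j <;> fin_cases i <;> fin_cases j <;>
    simp [omul, oconj, adj2, zeps₁, ze₃s]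

theorem oIm_zero [CharZero k] : oIm (0 : Oct k) = 0 := by
  simp [oIm, otr]

theorem nonnull_orbit_unipotent [CharZero k] :
    -- X ∈ K = ker κ : Im(ε₁·(e₃*)*) = 0:
    (oIm (omul 1 zeps₁ (oconj ze₃s)) = (0 : Oct k)) ∧
    -- X annihilates e₁, e₂, e₁*, e₂* (the four remaining basis vectors) and ε₁:
    (Xop ((0, Matrix.single 0 0 (1 : k)) : Oct k) = 0) ∧
    (Xop ((0, Matrix.single 0 1 (1 : k)) : Oct k) = 0) ∧
    (Xop ((0, Matrix.single 1 0 (1 : k)) : Oct k) = 0) ∧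
    (Xop ((0, Matrix.single 1 1 (1 : k)) : Oct k) = 0) ∧
    (Xop (zeps₁ : Oct k) = 0) ∧
    -- X(e₃) = −ε₁:
    (Xop (ze₃ : Oct k) = -zeps₁) ∧
    -- X is nilpotent: X² = 0:
    (∀ z : Oct k, Xop (Xop z) = 0) ∧
    -- X maps W^⊥ into W, i.e. exp(xX) acts as the identity on W^⊥/W:
    (∀ z : Oct k, Bform z zeps₁ = 0 → Bform z ze₃ = 0 →
      Xop z ∈ Submodule.span k {(zeps₁ : Oct k), ze₃}) := by
  refine ⟨by rw [omul_zeps₁_oconj_ze₃s, oIm_zero], ?_, ?_, ?_, ?_, ?_, Xop_ze₃, Xop_Xop,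
    fun z hz _ => Xop_mem_span_of_Bform_zeps₁_eq_zero hz⟩ <;>
  exact (Xop_eq_zero_iff _).2 (by simp [zeps₁])
end
end
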